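/- Let G be a finite graph, let the species set be {A, B, C, D} with A, B, C, D pairwise distinct, and let the only reaction rule be A + B → C + D. Then a configuration T is reachable from a configuration I if and only if (1) every cell v with I(v) ≠ T(v) satisfies either (I(v) = A and T(v) = C) or (I(v) = B and T(v) = D), and (2) the graph whose vertex set is {v : I(v) ≠ T(v)} with an edge between changed cells u and v whenever u and v are adjacent in G and {I(u), I(v)} = {A, B} has a perfect matching. -/

import Mathlib

/-- One application of a reaction rule `(a, b, c, d)` (meaning `a + b → c + d`) from the
rule set `R` on an ordered pair of adjacent cells of the surface `G`. -/
def Step {V S : Type*} [DecidableEq V] (G : SimpleGraph V) (R : Set (S × S × S × S))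
    (I T : V → S) : Prop :=
  ∃ u v r, r ∈ R ∧ G.Adj u v ∧ I u = r.1 ∧ I v = r.2.1 ∧
    T = Function.update (Function.update I u r.2.2.1) v r.2.2.2

/-- `T` is reachable from `I` by a finite sequence of rule applications. -/
def Reaches {V S : Type*} [DecidableEq V] (G : SimpleGraph V) (R : Set (S × S × S × S))
    (I T : V → S) : Prop :=
  Relation.ReflTransGen (Step G R) I T
/-- Species set {A, B, C, D} (four pairwise distinct species). -/
inductive Species : Type
  | A | B | C | D
  deriving DecidableEq

open Species

/-- Intermediate characterization: a finite set of pairwise disjoint adjacent pairs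
carrying the reaction, covering all changed cells. -/
def Cond {V : Type*} (G : SimpleGraph V) (I T : V → Species) : Prop :=
  ∃ P : Finset (V × V),
    (∀ p ∈ P, G.Adj p.1 p.2 ∧ I p.1 = A ∧ I p.2 = B ∧ T p.1 = C ∧ T p.2 = D) ∧
    (∀ p ∈ P, ∀ q ∈ P, p ≠ q → p.1 ≠ q.1 ∧ p.1 ≠ q.2 ∧ p.2 ≠ q.1 ∧ p.2 ≠ q.2) ∧
    (∀ v, (∀ p ∈ P, v ≠ p.1 ∧ v ≠ p.2) → I v = T v)

lemma cond_to_reaches {V : Type*} [DecidableEq V] (G : SimpleGraph V) :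
    ∀ (n : ℕ) (P : Finset (V × V)) (I T : V → Species), P.card = n →
    (∀ p ∈ P, G.Adj p.1 p.2 ∧ I p.1 = A ∧ I p.2 = B ∧ T p.1 = C ∧ T p.2 = D) →
    (∀ p ∈ P, ∀ q ∈ P, p ≠ q → p.1 ≠ q.1 ∧ p.1 ≠ q.2 ∧ p.2 ≠ q.1 ∧ p.2 ≠ q.2) →
    (∀ v, (∀ p ∈ P, v ≠ p.1 ∧ v ≠ p.2) → I v = T v) →
    Reaches G {(A, B, C, D)} I T := by
  intro n
  induction n with
  | zero =>
    intro P I T hcard _ _ hout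
    have hP : P = ∅ := Finset.card_eq_zero.mp hcard
    subst hP
    have : I = T := funext fun v => hout v (fun p hp => absurd hp (by simp))
    subst this
    exact Relation.ReflTransGen.refl
  | succ n ih =>
    intro P I T hcard hgood hdisj hout
    obtain ⟨p, hp⟩ : ∃ p, p ∈ P := Finset.card_pos.mp (by omega) |>.imp fun p h => h
    obtain ⟨hadj, hIA, hIB, hTC, hTD⟩ := hgood p hp
    set I' := Function.update (Function.update I p.1 C) p.2 D with hI'
    have hne : p.1 ≠ p.2 := G.ne_of_adj hadj
    have hstep : Step G {(A, B, C, D)} I I' := by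
      exact ⟨p.1, p.2, (A, B, C, D), rfl, hadj, hIA, hIB, rfl⟩
    have hI'1 : I' p.1 = C := by
      rw [hI', Function.update_of_ne hne, Function.update_self]
    have hI'2 : I' p.2 = D := by
      rw [hI', Function.update_self]
    have hI'other : ∀ v, v ≠ p.1 → v ≠ p.2 → I' v = I v := by
      intro v h1 h2
      rw [hI', Function.update_of_ne h2, Function.update_of_ne h1]
    refine Relation.ReflTransGen.head hstep ?_
    refine ih (P.erase p) I' T (by rw [Finset.card_erase_of_mem hp, hcard]; omega) ?_ ?_ ?_
    · intro q hq
      have hq' := Finset.mem_of_mem_erase hq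
      have hne' := Finset.ne_of_mem_erase hq
      obtain ⟨h1, h2, h3, h4⟩ := hdisj q hq' p hp hne'
      obtain ⟨ha, hb, hc, hd, he⟩ := hgood q hq'
      exact ⟨ha, by rw [hI'other q.1 h1 h2]; exact hb, by rw [hI'other q.2 h3 h4]; exact hc, hd, he⟩
    · intro q hq r hr hqr
      exact hdisj q (Finset.mem_of_mem_erase hq) r (Finset.mem_of_mem_erase hr) hqr
    · intro v hv
      by_cases h1 : v = p.1
      · subst h1; rw [hI'1, hTC]
      by_cases h2 : v = p.2
      · subst h2; rw [hI'2, hTD]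
      rw [hI'other v h1 h2]
      refine hout v ?_
      intro q hq
      by_cases hqp : q = p
      · subst hqp; exact ⟨h1, h2⟩
      · exact hv q (Finset.mem_erase.mpr ⟨hqp, hq⟩)

lemma reaches_to_cond {V : Type*} [DecidableEq V] (G : SimpleGraph V) (I T : V → Species)
    (h : Reaches G {(A, B, C, D)} I T) : Cond G I T := by
  induction h with
  | refl => exact ⟨∅, by simp, by simp, fun v _ => rfl⟩
  | tail hIJ hstep ih =>
    rename_i J T'
    obtain ⟨P, hgood, hdisj, hout⟩ := ih
    obtain ⟨u, v, r, hr, hadj, hJu, hJv, hT⟩ := hstep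
    have hr' : r = (A, B, C, D) := hr
    subst hr'
    simp only at hJu hJv
    have huv : u ≠ v := G.ne_of_adj hadj
    -- u, v are untouched by P
    have huP : ∀ p ∈ P, u ≠ p.1 ∧ u ≠ p.2 := by
      intro p hp
      obtain ⟨_, _, _, h1, h2⟩ := hgood p hp
      constructor
      · intro h; rw [h, h1] at hJu; exact absurd hJu (by simp)
      · intro h; rw [h, h2] at hJu; exact absurd hJu (by simp)
    have hvP : ∀ p ∈ P, v ≠ p.1 ∧ v ≠ p.2 := by
      intro p hp
      obtain ⟨_, _, _, h1, h2⟩ := hgood p hp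
      constructor
      · intro h; rw [h, h1] at hJv; exact absurd hJv (by simp)
      · intro h; rw [h, h2] at hJv; exact absurd hJv (by simp)
    have hIu : I u = A := by rw [hout u (huP), hJu]
    have hIv : I v = B := by rw [hout v (hvP), hJv]
    have hT'u : T' u = C := by
      rw [hT, Function.update_of_ne huv, Function.update_self]
    have hT'v : T' v = D := by rw [hT, Function.update_self]
    have hT'other : ∀ w, w ≠ u → w ≠ v → T' w = J w := by
      intro w h1 h2
      rw [hT, Function.update_of_ne h2, Function.update_of_ne h1]
    refine ⟨insert (u, v) P, ?_, ?_, ?_⟩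
    · intro p hp
      rcases Finset.mem_insert.mp hp with h | h
      · subst h; exact ⟨hadj, hIu, hIv, hT'u, hT'v⟩
      · obtain ⟨h1, h2, h3, h4, h5⟩ := hgood p h
        have hp1u : p.1 ≠ u := fun he => (huP p h).1 he.symm
        have hp1v : p.1 ≠ v := fun he => (hvP p h).1 he.symm
        have hp2u : p.2 ≠ u := fun he => (huP p h).2 he.symm
        have hp2v : p.2 ≠ v := fun he => (hvP p h).2 he.symm
        exact ⟨h1, h2, h3, by rw [hT'other p.1 hp1u hp1v]; exact h4,
          by rw [hT'other p.2 hp2u hp2v]; exact h5⟩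
    · intro p hp q hq hpq
      rcases Finset.mem_insert.mp hp with h | h <;>
        rcases Finset.mem_insert.mp hq with h' | h'
      · exact absurd (h.trans h'.symm) hpq
      · subst h
        obtain ⟨a1, a2⟩ := huP q h'
        obtain ⟨b1, b2⟩ := hvP q h'
        exact ⟨a1, a2, b1, b2⟩
      · subst h'
        obtain ⟨a1, a2⟩ := huP p h
        obtain ⟨b1, b2⟩ := hvP p h
        exact ⟨fun e => a1 e.symm, fun e => b1 e.symm, fun e => a2 e.symm, fun e => b2 e.symm⟩
      · exact hdisj p h q h' hpq
    · intro w hw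
      have hw1 := hw (u, v) (Finset.mem_insert_self _ _)
      have hwu : w ≠ u := hw1.1
      have hwv : w ≠ v := hw1.2
      rw [hT'other w hwu hwv]
      exact hout w (fun p hp => hw p (Finset.mem_insert_of_mem hp))


lemma cond_to_rhs {V : Type*} [Fintype V] [DecidableEq V] (G : SimpleGraph V)
    (I T : V → Species) (h : Cond G I T) :
    (∀ v ∈ {v | I v ≠ T v},
        (I v = Species.A ∧ T v = Species.C) ∨ (I v = Species.B ∧ T v = Species.D)) ∧
      ∃ M : (SimpleGraph.fromRel
          (fun u v : {v | I v ≠ T v} => G.Adj u v ∧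
            ((I u = Species.A ∧ I v = Species.B) ∨
             (I u = Species.B ∧ I v = Species.A)))).Subgraph,
        M.IsPerfectMatching := by
  obtain ⟨P, hgood, hdisj, hout⟩ := h
  have hsupp : ∀ v, I v ≠ T v → ∃ p ∈ P, v = p.1 ∨ v = p.2 := by
    intro v hv
    by_contra hc
    push_neg at hc
    exact hv (hout v hc)
  have key1 : ∀ p ∈ P, ∀ q ∈ P, p.1 = q.1 → p = q := by
    intro p hp q hq h
    by_contra hne
    exact (hdisj p hp q hq hne).1 h
  have key3 : ∀ p ∈ P, ∀ q ∈ P, p.2 = q.2 → p = q := by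
    intro p hp q hq h
    by_contra hne
    exact (hdisj p hp q hq hne).2.2.2 h
  have key2 : ∀ p ∈ P, ∀ q ∈ P, p.1 ≠ q.2 := by
    intro p hp q hq h
    have h1 := (hgood p hp).2.1
    rw [h, (hgood q hq).2.2.1] at h1
    exact absurd h1 (by simp)
  constructor
  · intro v hv
    obtain ⟨p, hp, h | h⟩ := hsupp v hv
    · subst h
      exact Or.inl ⟨(hgood p hp).2.1, (hgood p hp).2.2.2.1⟩
    · subst h
      exact Or.inr ⟨(hgood p hp).2.2.1, (hgood p hp).2.2.2.2⟩
  · refine ⟨⟨Set.univ, fun u v => ((u : V), (v : V)) ∈ P ∨ ((v : V), (u : V)) ∈ P,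
      ?_, fun _ => trivial, ?_⟩, ?_, fun v => trivial⟩
    · rintro u v (hp | hp)
      · rw [SimpleGraph.fromRel_adj]
        refine ⟨?_, Or.inl ⟨(hgood _ hp).1, Or.inl ⟨(hgood _ hp).2.1, (hgood _ hp).2.2.1⟩⟩⟩
        intro he
        have h1 := (hgood _ hp).2.1
        rw [Subtype.ext_iff.mp he] at h1
        rw [(hgood _ hp).2.2.1] at h1
        exact absurd h1 (by simp)
      · rw [SimpleGraph.fromRel_adj]
        refine ⟨?_, Or.inr ⟨(hgood _ hp).1, Or.inl ⟨(hgood _ hp).2.1, (hgood _ hp).2.2.1⟩⟩⟩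
        intro he
        have h1 := (hgood _ hp).2.1
        rw [← Subtype.ext_iff.mp he] at h1
        rw [(hgood _ hp).2.2.1] at h1
        exact absurd h1 (by simp)
    · refine ⟨fun u v h => ?_⟩
      exact h.symm
    · intro v _
      have hv : I (v : V) ≠ T (v : V) := v.2
      obtain ⟨p, hp, h | h⟩ := hsupp v hv
      · have hw : I p.2 ≠ T p.2 := by
          rw [(hgood p hp).2.2.1, (hgood p hp).2.2.2.2]; simp
        refine ⟨⟨p.2, hw⟩, Or.inl (by simp only [← h]; rw [h]; simpa using hp), ?_⟩
        rintro w' (hq | hq)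
        · have := key1 _ hq p hp (by rw [← h])
          apply Subtype.ext
          have := congrArg Prod.snd this
          simpa using this
        · exact absurd h.symm (key2 p hp _ hq)
      · have hw : I p.1 ≠ T p.1 := by
          rw [(hgood p hp).2.1, (hgood p hp).2.2.2.1]; simp
        refine ⟨⟨p.1, hw⟩, Or.inr (by simp only [← h]; rw [h]; simpa using hp), ?_⟩
        rintro w' (hq | hq)
        · exact absurd h (key2 _ hq p hp)
        · have := key3 _ hq p hp (by rw [← h])
          apply Subtype.ext
          have := congrArg Prod.fst this
          simpa using this

lemma rhs_to_cond {V : Type*} [Fintype V] [DecidableEq V] (G : SimpleGraph V)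
    (I T : V → Species)
    (h1 : ∀ v ∈ {v | I v ≠ T v},
        (I v = Species.A ∧ T v = Species.C) ∨ (I v = Species.B ∧ T v = Species.D))
    (M : (SimpleGraph.fromRel
          (fun u v : {v | I v ≠ T v} => G.Adj u v ∧
            ((I u = Species.A ∧ I v = Species.B) ∨
             (I u = Species.B ∧ I v = Species.A)))).Subgraph)
    (hM : M.IsPerfectMatching) : Cond G I T := by
  classical
  obtain ⟨hm, hs⟩ := hM
  haveI : Fintype {v : V | I v ≠ T v} := Fintype.ofFinite _
  -- partner function
  have hpart : ∀ v : {v | I v ≠ T v}, ∃! w, M.Adj v w := fun v => hm (hs v)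
  let f : {v : V | I v ≠ T v} → {v : V | I v ≠ T v} := fun v => (hpart v).exists.choose
  have hadj_f : ∀ v, M.Adj v (f v) := fun v => (hpart v).exists.choose_spec
  have huniq : ∀ v w, M.Adj v w → w = f v := fun v w h =>
    (hpart v).unique h (hadj_f v)
  have hAB : ∀ v w : {v | I v ≠ T v}, M.Adj v w → G.Adj (v : V) (w : V) ∧
      ((I (v : V) = A ∧ I (w : V) = B) ∨ (I (v : V) = B ∧ I (w : V) = A)) := by
    intro v w h
    have := M.adj_sub h
    rw [SimpleGraph.fromRel_adj] at this
    obtain ⟨-, h | h⟩ := this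
    · exact h
    · exact ⟨h.1.symm, h.2.elim (fun x => Or.inr ⟨x.2, x.1⟩) (fun x => Or.inl ⟨x.2, x.1⟩)⟩
  have finv : ∀ v, f (f v) = v := fun v => (huniq (f v) v (M.adj_symm (hadj_f v))).symm
  have hfA : ∀ v : {v | I v ≠ T v}, I (v : V) = A → I ((f v : {v | I v ≠ T v}) : V) = B := by
    intro v hv
    rcases (hAB v (f v) (hadj_f v)).2 with h | h
    · exact h.2
    · rw [hv] at h; exact absurd h.1 (by simp)
  have hfB : ∀ v : {v | I v ≠ T v}, I (v : V) = B → I ((f v : {v | I v ≠ T v}) : V) = A := by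
    intro v hv
    rcases (hAB v (f v) (hadj_f v)).2 with h | h
    · rw [hv] at h; exact absurd h.1 (by simp)
    · exact h.2
  refine ⟨(Finset.univ.filter (fun v : {v | I v ≠ T v} => I (v : V) = A)).image
      (fun v : {v | I v ≠ T v} => ((v : V), ((f v : {v | I v ≠ T v}) : V))), ?_, ?_, ?_⟩
  · intro p hp
    simp only [Finset.mem_image, Finset.mem_filter, Finset.mem_univ, true_and] at hp
    obtain ⟨v, hvA, rfl⟩ := hp
    have hfvB : I ((f v : {v | I v ≠ T v}) : V) = B := hfA v hvA
    have hTv : T (v : V) = C := by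
      rcases h1 (v : V) v.2 with h | h
      · exact h.2
      · rw [hvA] at h; exact absurd h.1 (by simp)
    have hTfv : T ((f v : {v | I v ≠ T v}) : V) = D := by
      rcases h1 ((f v : {v | I v ≠ T v}) : V) (f v).2 with h | h
      · rw [hfvB] at h; exact absurd h.1 (by simp)
      · exact h.2
    exact ⟨(hAB v (f v) (hadj_f v)).1, hvA, hfvB, hTv, hTfv⟩
  · intro p hp q hq hpq
    simp only [Finset.mem_image, Finset.mem_filter, Finset.mem_univ, true_and] at hp hq
    obtain ⟨v, hvA, rfl⟩ := hp
    obtain ⟨u, huA, rfl⟩ := hq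
    have hvu : v ≠ u := fun h => hpq (by rw [h])
    refine ⟨fun h => hvu (Subtype.ext h), ?_, ?_, ?_⟩
    · intro h
      have h' : (v : V) = ((f u : {v | I v ≠ T v}) : V) := h
      rw [h', hfA u huA] at hvA
      exact absurd hvA (by simp)
    · intro h
      have h' : ((f v : {v | I v ≠ T v}) : V) = (u : V) := h
      rw [← h', hfA v hvA] at huA
      exact absurd huA (by simp)
    · intro h
      have : f v = f u := Subtype.ext h
      have : v = u := by rw [← finv v, this, finv u]
      exact hvu this
  · intro w hw
    by_contra hne
    have hwCh : w ∈ {v : V | I v ≠ T v} := hne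
    set v : {v : V | I v ≠ T v} := ⟨w, hwCh⟩ with hv
    rcases h1 w hwCh with h | h
    · have hmem : ((v : V), ((f v : {v | I v ≠ T v}) : V)) ∈
          (Finset.univ.filter (fun v : {v | I v ≠ T v} => I (v : V) = A)).image
            (fun v : {v | I v ≠ T v} => ((v : V), ((f v : {v | I v ≠ T v}) : V))) := by
        simp only [Finset.mem_image, Finset.mem_filter, Finset.mem_univ, true_and]
        exact ⟨v, h.1, rfl⟩
      exact (hw _ hmem).1 rfl
    · have hffv : f (f v) = v := finv v
      have hmem : (((f v : {v | I v ≠ T v}) : V), ((f (f v) : {v | I v ≠ T v}) : V)) ∈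
          (Finset.univ.filter (fun v : {v | I v ≠ T v} => I (v : V) = A)).image
            (fun v : {v | I v ≠ T v} => ((v : V), ((f v : {v | I v ≠ T v}) : V))) := by
        simp only [Finset.mem_image, Finset.mem_filter, Finset.mem_univ, true_and]
        exact ⟨f v, hfB v h.1, rfl⟩
      have := (hw _ hmem).2
      rw [hffv] at this
      exact this rfl

/-- With species `{A, B, C, D}` and the single rule `A + B → C + D`, `T` is reachable
from `I` iff every changed cell goes from `A` to `C` or from `B` to `D`, and the graph
on changed cells with an edge between adjacent cells holding `{A, B}` in `I` has a
perfect matching. -/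
theorem stmt5 {V : Type*} [Fintype V] [DecidableEq V] (G : SimpleGraph V)
    (I T : V → Species) :
    Reaches G {(Species.A, Species.B, Species.C, Species.D)} I T ↔
      (∀ v ∈ {v | I v ≠ T v},
        (I v = Species.A ∧ T v = Species.C) ∨ (I v = Species.B ∧ T v = Species.D)) ∧
      ∃ M : (SimpleGraph.fromRel
          (fun u v : {v | I v ≠ T v} => G.Adj u v ∧
            ((I u = Species.A ∧ I v = Species.B) ∨
             (I u = Species.B ∧ I v = Species.A)))).Subgraph,
        M.IsPerfectMatching := by
  constructor
  · intro h
    exact cond_to_rhs G I T (reaches_to_cond G I T h)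
  · rintro ⟨h1, M, hM⟩
    obtain ⟨P, a, b, c⟩ := rhs_to_cond G I T h1 M hM
    exact cond_to_reaches G P.card P I T rfl a b c
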